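/- (Theorem 3.1(i)) Let α₁ ≤ ⋯ ≤ α_s be nondecreasing constants, let D₁(k,s) = max_{k ≤ m ≤ s} [ m·α_{s-m+k}/k + m·Σ_{j=k+1}^{m} (α_{s-m+j} - α_{s-m+j-1})/j ], and let α ∈ (0,1). Suppose each p-value satisfies P(p̂ᵢ ≤ u) ≤ u for u ∈ (0,1) whenever hypothesis i is true. Then the stepup procedure with critical values α·αᵢ/D₁(k,s) satisfies k-FWER ≤ α, for every joint distribution of the p-values. -/

import Mathlib

/-!
If the procedure rejects `g ≥ k` of the `T = #I` true hypotheses, then at most `s - T` of its `r`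
rejections are false ones, so `r ≤ s - T + g` and all `g` rejected true p-values lie below the
critical value of index `s - T + g`. The event is therefore contained in `⋃_{k ≤ g ≤ T} {N_g ≥ g}`,
where `N_g` counts the true p-values below that critical value. Since `N_g` is nondecreasing in
`g`, the indicator of this union is at most `∑_{k ≤ g < T} N_g (1/g - 1/(g+1)) + N_T / T`;
super-uniformity gives `E N_g ≤ T c_{s-T+g}`, and summation by parts turns the resulting bound into
`α S₁(k, s, T) / D₁(k, s) ≤ α`.
-/

open MeasureTheory Finset
open scoped Classical

noncomputable def orderStat {n : ℕ} (p : Fin n → ℝ) (k : ℕ) : ℝ :=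
  if h : k - 1 < n then p (Tuple.sort p ⟨k - 1, h⟩) else 0

noncomputable def numReject {n : ℕ} (c : ℕ → ℝ) (p : Fin n → ℝ) : ℕ :=
  ((Finset.Icc 1 n).filter (fun j => orderStat p j ≤ c j)).sup id

noncomputable def rejectedSet {n : ℕ} (c : ℕ → ℝ) (p : Fin n → ℝ) : Finset (Fin n) :=
  (Finset.univ.filter (fun j : Fin n => (j : ℕ) + 1 ≤ numReject c p)).image (Tuple.sort p)

noncomputable def trueOrderStat {n : ℕ} (I : Finset (Fin n)) (p : Fin n → ℝ) (k : ℕ) : ℝ :=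
  orderStat (fun j : Fin I.card => p (I.orderIsoOfFin rfl j).1) k

noncomputable def S1val (c : ℕ → ℝ) (k s m : ℕ) : ℝ :=
  m * c (s - m + k) / k + m * ∑ j ∈ Finset.Icc (k + 1) m, (c (s - m + j) - c (s - m + j - 1)) / j

theorem sum_Ico_inv_sub_inv_succ {G T : ℕ} (hGT : G ≤ T) :
    ∑ g ∈ Ico G T, ((g : ℝ)⁻¹ - ((g : ℝ) + 1)⁻¹) = (G : ℝ)⁻¹ - (T : ℝ)⁻¹ := by
  have h := Finset.sum_Ico_sub (fun g : ℕ => -((g : ℝ)⁻¹)) hGT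
  push_cast at h
  rw [show (G : ℝ)⁻¹ - (T : ℝ)⁻¹ = -(T : ℝ)⁻¹ - -(G : ℝ)⁻¹ by ring, ← h]
  exact Finset.sum_congr rfl fun g _ => by ring

theorem sum_Ico_mul_inv_sub_inv_succ_add (b : ℕ → ℝ) {k T : ℕ} (hkT : k ≤ T) :
    ∑ g ∈ Ico k T, b g * ((g : ℝ)⁻¹ - ((g : ℝ) + 1)⁻¹) + b T / T
      = b k / k + ∑ g ∈ Icc (k + 1) T, (b g - b (g - 1)) / g := by
  induction T, hkT using Nat.le_induction with
  | base => simp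
  | succ T hkT ih =>
    rw [Finset.sum_Ico_succ_top hkT, Finset.sum_Icc_succ_top (by omega), Nat.add_sub_cancel]
    push_cast
    linear_combination ih

theorem inv_sub_inv_succ_nonneg {g : ℕ} (hg : 1 ≤ g) : 0 ≤ (g : ℝ)⁻¹ - ((g : ℝ) + 1)⁻¹ := by
  have : (1 : ℝ) ≤ g := by exact_mod_cast hg
  exact sub_nonneg.2 (inv_anti₀ (by positivity) (by linarith))

theorem one_le_sum_Ico_mul_inv_sub_inv_succ_add {N : ℕ → ℝ} {k G T : ℕ} (hk : 1 ≤ k)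
    (hkG : k ≤ G) (hGT : G ≤ T) (hN0 : ∀ g, 0 ≤ N g) (hN : MonotoneOn N (Set.Icc G T))
    (hGN : (G : ℝ) ≤ N G) :
    1 ≤ ∑ g ∈ Ico k T, N g * ((g : ℝ)⁻¹ - ((g : ℝ) + 1)⁻¹) + N T / T := by
  have hw : ∀ g ∈ Ico k T, 0 ≤ (g : ℝ)⁻¹ - ((g : ℝ) + 1)⁻¹ := fun g hg =>
    inv_sub_inv_succ_nonneg (hk.trans (Finset.mem_Ico.1 hg).1)
  have hle : ∀ g ∈ Set.Icc G T, (G : ℝ) ≤ N g := fun g hg =>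
    hGN.trans (hN ⟨le_rfl, hGT⟩ hg hg.1)
  have hG : (0 : ℝ) < G := by exact_mod_cast hk.trans hkG
  have hT : (0 : ℝ) < T := hG.trans_le (by exact_mod_cast hGT)
  calc (1 : ℝ) = ∑ g ∈ Ico G T, (G : ℝ) * ((g : ℝ)⁻¹ - ((g : ℝ) + 1)⁻¹) + G / T := by
        rw [← Finset.mul_sum, sum_Ico_inv_sub_inv_succ hGT]
        field_simp
        ring
    _ ≤ ∑ g ∈ Ico G T, N g * ((g : ℝ)⁻¹ - ((g : ℝ) + 1)⁻¹) + N T / T := by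
        gcongr with g hg
        · exact hw g (Finset.Ico_subset_Ico_left hkG hg)
        · exact hle g (Finset.mem_Icc.1 (Finset.Ico_subset_Icc_self hg))
        · exact hle T ⟨hGT, le_rfl⟩
    _ ≤ ∑ g ∈ Ico k T, N g * ((g : ℝ)⁻¹ - ((g : ℝ) + 1)⁻¹) + N T / T := by
        gcongr
        exact fun g hg _ => mul_nonneg (hN0 g) (hw g hg)

theorem natCast_card_filter_le_eq_sum_indicator {Ω ι : Type*} (I : Finset ι) (p : ι → Ω → ℝ)
    (u : ℝ) (ω : Ω) : (#{i ∈ I | p i ω ≤ u} : ℝ) = ∑ i ∈ I, {ω | p i ω ≤ u}.indicator 1 ω := by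
  rw [Finset.natCast_card_filter]
  exact Finset.sum_congr rfl fun i _ => by simp [Set.indicator_apply]

section Probability

variable {Ω ι : Type*} [MeasurableSpace Ω] {μ : Measure Ω} [IsProbabilityMeasure μ]

theorem measure_le_le_ofReal_of_nonneg {f : Ω → ℝ}
    (hf : ∀ u ∈ Set.Ioo (0 : ℝ) 1, μ {ω | f ω ≤ u} ≤ ENNReal.ofReal u) {u : ℝ} (hu : 0 ≤ u) :
    μ {ω | f ω ≤ u} ≤ ENNReal.ofReal u := by
  rcases hu.eq_or_lt with rfl | hu
  · refine ENNReal.le_of_forall_pos_le_add fun ε hε _ => ?_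
    set v : ℝ := min ε (1 / 2)
    have hv : v ∈ Set.Ioo (0 : ℝ) 1 :=
      ⟨by positivity, (min_le_right _ _).trans_lt (by norm_num)⟩
    calc μ {ω | f ω ≤ 0} ≤ μ {ω | f ω ≤ v} := measure_mono fun ω hω => hω.trans hv.1.le
      _ ≤ ENNReal.ofReal v := hf v hv
      _ ≤ ENNReal.ofReal 0 + ε := by
        rw [ENNReal.ofReal_zero, zero_add, ← ENNReal.ofReal_coe_nnreal]
        exact ENNReal.ofReal_le_ofReal (min_le_left _ _)
  rcases lt_or_ge u 1 with hu1 | hu1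
  · exact hf u ⟨hu, hu1⟩
  · exact prob_le_one.trans (ENNReal.one_le_ofReal.2 hu1)

theorem integrable_card_filter_le (I : Finset ι) {p : ι → Ω → ℝ}
    (hmeas : ∀ i ∈ I, Measurable (p i)) (u : ℝ) :
    Integrable (fun ω => (#{i ∈ I | p i ω ≤ u} : ℝ)) μ := by
  simp_rw [natCast_card_filter_le_eq_sum_indicator]
  exact integrable_finsetSum _ fun i hi =>
    (integrable_const 1).indicator (measurableSet_le (hmeas i hi) measurable_const)

theorem integral_card_filter_le_le (I : Finset ι) {p : ι → Ω → ℝ}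
    (hmeas : ∀ i ∈ I, Measurable (p i))
    (hp : ∀ i ∈ I, ∀ u ∈ Set.Ioo (0 : ℝ) 1, μ {ω | p i ω ≤ u} ≤ ENNReal.ofReal u)
    {u : ℝ} (hu : 0 ≤ u) :
    ∫ ω, (#{i ∈ I | p i ω ≤ u} : ℝ) ∂μ ≤ #I * u := by
  have hmeas' : ∀ i ∈ I, MeasurableSet {ω | p i ω ≤ u} := fun i hi =>
    measurableSet_le (hmeas i hi) measurable_const
  simp_rw [natCast_card_filter_le_eq_sum_indicator]
  rw [integral_finsetSum _ fun i hi => (integrable_const 1).indicator (hmeas' i hi)]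
  calc ∑ i ∈ I, ∫ ω, {ω | p i ω ≤ u}.indicator 1 ω ∂μ ≤ ∑ _i ∈ I, u := by
        refine Finset.sum_le_sum fun i hi => ?_
        rw [integral_indicator_one (hmeas' i hi)]
        exact ENNReal.toReal_le_of_le_ofReal hu (measure_le_le_ofReal_of_nonneg (hp i hi) hu)
    _ = #I * u := by rw [Finset.sum_const, nsmul_eq_mul]

theorem measureReal_exists_le_card_filter_le_le (I : Finset ι) {p : ι → Ω → ℝ}
    (hmeas : ∀ i ∈ I, Measurable (p i))
    (hp : ∀ i ∈ I, ∀ u ∈ Set.Ioo (0 : ℝ) 1, μ {ω | p i ω ≤ u} ≤ ENNReal.ofReal u)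
    {k : ℕ} (hk : 1 ≤ k) (hkI : k ≤ #I) {β : ℕ → ℝ} (hβ : MonotoneOn β (Set.Icc k #I))
    (hβ0 : 0 ≤ β k) :
    μ.real {ω | ∃ g ∈ Icc k #I, g ≤ #{i ∈ I | p i ω ≤ β g}}
      ≤ #I * (β k / k + ∑ g ∈ Icc (k + 1) #I, (β g - β (g - 1)) / g) := by
  set T := #I
  set N : ℕ → Ω → ℝ := fun g ω => #{i ∈ I | p i ω ≤ β g}
  set w : ℕ → ℝ := fun g => (g : ℝ)⁻¹ - ((g : ℝ) + 1)⁻¹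
  set f : Ω → ℝ := fun ω => ∑ g ∈ Ico k T, N g ω * w g + N T ω / T
  have hw : ∀ g ∈ Ico k T, 0 ≤ w g := fun g hg =>
    inv_sub_inv_succ_nonneg (hk.trans (Finset.mem_Ico.1 hg).1)
  have hN : ∀ g, Integrable (N g) μ := fun g => integrable_card_filter_le I hmeas _
  have hEN : ∀ g ∈ Set.Icc k T, ∫ ω, N g ω ∂μ ≤ T * β g := fun g hg =>
    integral_card_filter_le_le I hmeas hp (hβ0.trans (hβ ⟨le_rfl, hkI⟩ hg hg.1))
  have hf : Integrable f μ :=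
    (integrable_finsetSum _ fun g _ => (hN g).mul_const _).add ((hN T).div_const _)
  have hf0 : ∀ ω, 0 ≤ f ω := fun ω =>
    add_nonneg (Finset.sum_nonneg fun g hg => mul_nonneg (Nat.cast_nonneg _) (hw g hg))
      (div_nonneg (Nat.cast_nonneg _) (Nat.cast_nonneg _))
  have hsub : {ω | ∃ g ∈ Icc k T, g ≤ #{i ∈ I | p i ω ≤ β g}} ⊆ {ω | 1 ≤ f ω} := by
    rintro ω ⟨G, hG, hGN⟩
    rw [Finset.mem_Icc] at hG
    refine one_le_sum_Ico_mul_inv_sub_inv_succ_add hk hG.1 hG.2 (fun g => Nat.cast_nonneg _)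
      (fun g hg g' hg' hgg' => ?_) (by simp only [N]; exact_mod_cast hGN)
    have hββ := hβ ⟨hG.1.trans hg.1, hg.2⟩ ⟨hG.1.trans hg'.1, hg'.2⟩ hgg'
    simp only [N, Nat.cast_le]
    exact Finset.card_le_card fun i hi => by
      rw [Finset.mem_filter] at hi ⊢
      exact ⟨hi.1, hi.2.trans hββ⟩
  calc μ.real {ω | ∃ g ∈ Icc k T, g ≤ #{i ∈ I | p i ω ≤ β g}}
      ≤ μ.real {ω | 1 ≤ f ω} := measureReal_mono hsub
    _ ≤ ∫ ω, f ω ∂μ := by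
        simpa using mul_meas_ge_le_integral_of_nonneg (ae_of_all _ hf0) hf 1
    _ = ∑ g ∈ Ico k T, (∫ ω, N g ω ∂μ) * w g + (∫ ω, N T ω ∂μ) / T := by
        rw [integral_add (integrable_finsetSum _ fun g _ => (hN g).mul_const _)
          ((hN T).div_const _), integral_finsetSum _ fun g _ => (hN g).mul_const _, integral_div]
        simp_rw [integral_mul_const]
    _ ≤ ∑ g ∈ Ico k T, T * β g * w g + T * β T / T := by
        gcongr with g hg
        · exact hw g hg
        · exact hEN g (Finset.mem_Icc.1 (Finset.Ico_subset_Icc_self hg))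
        · exact hEN T ⟨hkI, le_rfl⟩
    _ = T * (β k / k + ∑ g ∈ Icc (k + 1) T, (β g - β (g - 1)) / g) := by
        rw [sum_Ico_mul_inv_sub_inv_succ_add (fun g => T * β g) hkI, mul_add, Finset.mul_sum]
        congr 1
        · ring
        · exact Finset.sum_congr rfl fun g _ => by ring

end Probability

section Stepup

variable {n : ℕ} (c : ℕ → ℝ) (P : Fin n → ℝ)

theorem numReject_le : numReject c P ≤ n :=
  Finset.sup_le fun _ hj => (Finset.mem_Icc.1 (Finset.mem_filter.1 hj).1).2

theorem card_rejectedSet : #(rejectedSet c P) = numReject c P := by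
  rw [rejectedSet, Finset.card_image_of_injective _ (Tuple.sort P).injective]
  simp only [Nat.add_one_le_iff]
  rw [Fin.card_filter_val_lt, min_eq_right (numReject_le c P)]

theorem orderStat_numReject_le (h : 0 < numReject c P) :
    orderStat P (numReject c P) ≤ c (numReject c P) := by
  have hne : ((Finset.Icc 1 n).filter fun j => orderStat P j ≤ c j).Nonempty := by
    by_contra hempty
    rw [Finset.not_nonempty_iff_eq_empty] at hempty
    simp [numReject, hempty] at h
  obtain ⟨j, hj, hjr⟩ := Finset.exists_mem_eq_sup _ hne id
  rw [numReject, hjr]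
  exact (Finset.mem_filter.1 hj).2

theorem le_orderStat_numReject_of_mem_rejectedSet {i : Fin n} (hi : i ∈ rejectedSet c P) :
    P i ≤ orderStat P (numReject c P) := by
  obtain ⟨j, hj, rfl⟩ := Finset.mem_image.1 hi
  have hj : (j : ℕ) + 1 ≤ numReject c P := (Finset.mem_filter.1 hj).2
  have hr : numReject c P - 1 < n := by have := numReject_le c P; omega
  have hjr : j ≤ ⟨numReject c P - 1, hr⟩ := Fin.le_def.2 (by simp only; omega)
  rw [orderStat, dif_pos hr]
  exact Tuple.monotone_sort P hjr

theorem card_rejectedSet_inter_le_card_filter (hc : MonotoneOn c (Set.Icc 1 n))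
    (I : Finset (Fin n)) :
    #(rejectedSet c P ∩ I) ≤ #{i ∈ I | P i ≤ c (n - #I + #(rejectedSet c P ∩ I))} := by
  set g := #(rejectedSet c P ∩ I) with hg
  set r := numReject c P with hr
  have hsplit : g + #(rejectedSet c P \ I) = r := by
    rw [hg, hr, ← card_rejectedSet]
    exact Finset.card_inter_add_card_sdiff _ _
  have hout : #(rejectedSet c P \ I) ≤ n - #I := by
    simpa [Finset.card_compl] using
      Finset.card_le_card fun i (hi : i ∈ rejectedSet c P \ I) =>
        Finset.mem_compl.2 (Finset.mem_sdiff.1 hi).2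
  have hIn : #I ≤ n := by simpa using Finset.card_le_univ I
  have hgI : g ≤ #I := Finset.card_le_card Finset.inter_subset_right
  have hrn : r ≤ n := numReject_le c P
  rcases Nat.eq_zero_or_pos g with hg0 | hg0
  · rw [hg0]
    exact Nat.zero_le _
  have hr0 : 0 < r := by omega
  refine Finset.card_le_card fun i hi => ?_
  rw [Finset.mem_inter] at hi
  refine Finset.mem_filter.2 ⟨hi.2, ?_⟩
  calc P i ≤ orderStat P r := le_orderStat_numReject_of_mem_rejectedSet c P hi.1
    _ ≤ c r := orderStat_numReject_le c P hr0
    _ ≤ c (n - #I + g) := hc ⟨hr0, hrn⟩ ⟨by omega, by omega⟩ (by omega)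

end Stepup

theorem S1val_nonneg {c : ℕ → ℝ} {k s m : ℕ} (hc : MonotoneOn c (Set.Icc 1 s)) (hc0 : 0 ≤ c 1)
    (hk : 1 ≤ k) (hkm : k ≤ m) (hms : m ≤ s) : 0 ≤ S1val c k s m := by
  have hc0' : 0 ≤ c (s - m + k) :=
    hc0.trans (hc ⟨le_rfl, by omega⟩ ⟨by omega, by omega⟩ (by omega))
  have hdiff : ∀ j ∈ Icc (k + 1) m, 0 ≤ (c (s - m + j) - c (s - m + j - 1)) / j := by
    intro j hj
    rw [Finset.mem_Icc] at hj
    exact div_nonneg (sub_nonneg.2 (hc ⟨by omega, by omega⟩ ⟨by omega, by omega⟩ (by omega)))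
      (Nat.cast_nonneg _)
  unfold S1val
  have := Finset.sum_nonneg hdiff
  positivity

theorem measureReal_le_card_rejectedSet_inter_le {Ω : Type*} [MeasurableSpace Ω]
    {μ : Measure Ω} [IsProbabilityMeasure μ] {s k : ℕ} (hk : 1 ≤ k) {c : ℕ → ℝ}
    (hc : MonotoneOn c (Set.Icc 1 s)) (hc0 : 0 ≤ c 1) {a : ℝ} (ha : 0 ≤ a)
    {p : Fin s → Ω → ℝ} (I : Finset (Fin s)) (hmeas : ∀ i ∈ I, Measurable (p i))
    (hp : ∀ i ∈ I, ∀ u ∈ Set.Ioo (0 : ℝ) 1, μ {ω | p i ω ≤ u} ≤ ENNReal.ofReal u)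
    (hkI : k ≤ #I) :
    μ.real {ω | k ≤ #(rejectedSet (fun i => a * c i) (fun i => p i ω) ∩ I)}
      ≤ a * S1val c k s #I := by
  have hIs : #I ≤ s := by simpa using Finset.card_le_univ I
  have hcrit : MonotoneOn (fun i => a * c i) (Set.Icc 1 s) := fun i hi j hj hij =>
    mul_le_mul_of_nonneg_left (hc hi hj hij) ha
  have hsub : {ω | k ≤ #(rejectedSet (fun i => a * c i) (fun i => p i ω) ∩ I)}
      ⊆ {ω | ∃ g ∈ Icc k #I, g ≤ #{i ∈ I | p i ω ≤ a * c (s - #I + g)}} :=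
    fun ω hω => ⟨_, Finset.mem_Icc.2 ⟨hω, Finset.card_le_card Finset.inter_subset_right⟩,
      card_rejectedSet_inter_le_card_filter _ _ hcrit I⟩
  calc μ.real {ω | k ≤ #(rejectedSet (fun i => a * c i) (fun i => p i ω) ∩ I)}
      ≤ μ.real {ω | ∃ g ∈ Icc k #I, g ≤ #{i ∈ I | p i ω ≤ a * c (s - #I + g)}} :=
        measureReal_mono hsub
    _ ≤ #I * (a * c (s - #I + k) / k + ∑ g ∈ Icc (k + 1) #I,
          (a * c (s - #I + g) - a * c (s - #I + (g - 1))) / g) :=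
        measureReal_exists_le_card_filter_le_le I hmeas hp hk hkI
          (fun i ⟨hki, _⟩ j ⟨_, hjI⟩ hij => hcrit ⟨by omega, by omega⟩ ⟨by omega, by omega⟩
            (by omega))
          (mul_nonneg ha (hc0.trans (hc ⟨le_rfl, by omega⟩ ⟨by omega, by omega⟩ (by omega))))
    _ = a * S1val c k s #I := by
        rw [S1val, mul_add, mul_add, Finset.mul_sum, Finset.mul_sum, Finset.mul_sum]
        congr 1
        · ring
        · refine Finset.sum_congr rfl fun g hg => ?_
          rw [show s - #I + (g - 1) = s - #I + g - 1 by rw [Finset.mem_Icc] at hg; omega]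
          ring

/-- Theorem 3.1(i): the stepup procedure with critical values `α·αᵢ/D₁(k,s)`
controls the k-FWER at level `α` for every joint distribution of the p-values. -/
theorem stmt8 {Ω : Type*} [MeasurableSpace Ω] (μ : Measure Ω) [IsProbabilityMeasure μ]
    {s k : ℕ} (hk1 : 1 ≤ k) (hks : k ≤ s)
    (c : ℕ → ℝ) (hc : ∀ i j, 1 ≤ i → i ≤ j → j ≤ s → c i ≤ c j) (hc0 : 0 ≤ c 1)
    (α : ℝ) (hα : α ∈ Set.Ioo (0 : ℝ) 1)
    (p : Fin s → Ω → ℝ) (hmeas : ∀ i, Measurable (p i))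
    (I : Finset (Fin s))
    (hp : ∀ i ∈ I, ∀ u ∈ Set.Ioo (0 : ℝ) 1, μ {ω | p i ω ≤ u} ≤ ENNReal.ofReal u) :
    (μ {ω | k ≤ (rejectedSet
        (fun i => α * c i / ((Finset.Icc k s).sup' (Finset.nonempty_Icc.mpr hks) (S1val c k s)))
        (fun i => p i ω) ∩ I).card}).toReal ≤ α := by
  set D := (Finset.Icc k s).sup' (Finset.nonempty_Icc.mpr hks) (S1val c k s)
  have hα0 : 0 ≤ α := hα.1.le
  have hcm : MonotoneOn c (Set.Icc 1 s) := fun i hi j hj hij => hc i j hi.1 hij hj.2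
  have hSD : ∀ m ∈ Icc k s, S1val c k s m ≤ D := fun m hm => Finset.le_sup' _ hm
  have hD : 0 ≤ D := (S1val_nonneg hcm hc0 hk1 hks le_rfl).trans (hSD s (by simp [hks]))
  rcases lt_or_ge #I k with hIk | hkI
  · have hempty : {ω | k ≤ #(rejectedSet (fun i => α * c i / D) (fun i => p i ω) ∩ I)} = ∅ :=
      Set.eq_empty_of_forall_notMem fun ω hω =>
        (hIk.trans_le' (Finset.card_le_card Finset.inter_subset_right)).not_ge hω
    simp [hempty, hα0]
  have hIs : #I ≤ s := by simpa using Finset.card_le_univ I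
  simp_rw [mul_div_right_comm α _ D]
  calc _ ≤ α / D * S1val c k s #I :=
        measureReal_le_card_rejectedSet_inter_le hk1 hcm hc0 (div_nonneg hα0 hD) I
          (fun i _ => hmeas i) hp hkI
    _ ≤ α := by
        rcases hD.eq_or_lt with hD0 | hD0
        · simp [← hD0, hα0]
        · rw [div_mul_eq_mul_div, div_le_iff₀ hD0]
          exact mul_le_mul_of_nonneg_left (hSD _ (Finset.mem_Icc.2 ⟨hkI, hIs⟩)) hα0
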